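/- Let X and Y be normalized automata over A and S with converging behaviors x := ⟦X⟧ and y := ⟦Y⟧ (both proper since X and Y are normalized). Then the diverging behavior of the conjoin X ⋆ Y equals the conjoin of the behaviors: for every infinite word w and every n ∈ ℕ, (X ⋆ Y)(w,n) = (x·y*)(w[0..n))·χ(w,x·y*). -/

import Mathlib

open scoped Classical

/-- A weighted automaton over alphabet `A` and semiring `S`: a finite set of
states `Q`, initial distribution `I`, final distribution `F`, and a transition
matrix `M a` for each letter `a`. -/
structure WA (A : Type) (S : Type) [Semiring S] where
  Q : Type
  [fin : Fintype Q]
  [deq : DecidableEq Q]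
  I : Q → S
  F : Q → S
  M : A → Matrix Q Q S

attribute [instance] WA.fin WA.deq

variable {A S : Type} [Semiring S]

/-- The product `M(a₀)·…·M(a_{n−1})` over a finite word (identity for `[]`). -/
def Mword (𝒜 : WA A S) (w : List A) : Matrix 𝒜.Q 𝒜.Q S :=
  (w.map 𝒜.M).prod

/-- The converging behavior `⟦𝒜⟧(w) = Σ_{i,f} I(i)·M(w)_{i,f}·F(f)`. -/
def convB (𝒜 : WA A S) (w : List A) : S :=
  ∑ i, ∑ f, 𝒜.I i * Mword 𝒜 w i f * 𝒜.F f

/-- The first `n` letters of an infinite word. -/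
def wpre (w : ℕ → A) (n : ℕ) : List A := (List.range n).map w

/-- A pair of states `(i,f)` is activated by the infinite word `w` if for
every `n₀` there is `n ≥ n₀` with `M(w[0..n))_{i,f} ≠ 0`. -/
def Activated (𝒜 : WA A S) (w : ℕ → A) (i f : 𝒜.Q) : Prop :=
  ∀ n₀ : ℕ, ∃ n, n₀ ≤ n ∧ Mword 𝒜 (wpre w n) i f ≠ 0

/-- The diverging behavior `𝒜(w,n) = Σ_{(i,f) activated} I(i)·M(w[0..n))_{i,f}·F(f)`. -/
noncomputable def divB (𝒜 : WA A S) (w : ℕ → A) (n : ℕ) : S :=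
  ∑ p : 𝒜.Q × 𝒜.Q,
    if Activated 𝒜 w p.1 p.2 then
      𝒜.I p.1 * Mword 𝒜 (wpre w n) p.1 p.2 * 𝒜.F p.2
    else 0

/-- Product of converging power series: sum over all splittings of the word. -/
def cmul (x y : List A → S) : List A → S :=
  fun w => ∑ k ∈ Finset.range (w.length + 1), x (w.take k) * y (w.drop k)

/-- The multiplicative unit: 1 on the empty word, 0 elsewhere. -/
def cone : List A → S := fun w => match w with | [] => 1 | _ => 0

/-- Powers of a converging power series. -/
def cpow (x : List A → S) : ℕ → (List A → S)
  | 0 => cone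
  | n + 1 => cmul x (cpow x n)

/-- The star `x* = Σ_{k ≥ 0} x^k`; for proper `x` only the terms with
`k ≤ |w|` can contribute on the word `w`. -/
def cstar (x : List A → S) : List A → S :=
  fun w => ∑ k ∈ Finset.range (w.length + 1), cpow x k w

/-- `Rat*(S,A)`: the smallest set of converging power series containing all
finitely supported ones and closed under sum, product, and star of proper
members. -/
inductive IsRat : (List A → S) → Prop
  | finite (x : List A → S) (h : (Function.support x).Finite) : IsRat x
  | add {x y : List A → S} : IsRat x → IsRat y → IsRat (x + y)
  | mul {x y : List A → S} : IsRat x → IsRat y → IsRat (cmul x y)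
  | star {x : List A → S} : IsRat x → x [] = 0 → IsRat (cstar x)

/-- `χ(w,x) = 1` iff arbitrarily long prefixes of `w` have nonzero coefficient. -/
noncomputable def chi (w : ℕ → A) (x : List A → S) : S :=
  if ∀ n₀ : ℕ, ∃ n, n₀ ≤ n ∧ x (wpre w n) ≠ 0 then 1 else 0

/-- `s^ω(w,n) = s*(w[0..n))·χ(w,s*)`. -/
noncomputable def omegaPS (s : List A → S) : (ℕ → A) → ℕ → S :=
  fun w n => cstar s (wpre w n) * chi w (cstar s)

/-- The conjoin `(x ⋆ y)(w,n) = (x·y*)(w[0..n))·χ(w,x·y*)`. -/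
noncomputable def conjoinPS (x y : List A → S) : (ℕ → A) → ℕ → S :=
  fun w n => cmul x (cstar y) (wpre w n) * chi w (cmul x (cstar y))

/-- `Rat^ω(S,A)`: the smallest set of diverging power series closed under
finite sums and left/right scalar multiplication containing all `x ⋆ y` and
`z^ω` for proper rational `x`, `y`, `z`. -/
inductive IsRatOmega : ((ℕ → A) → ℕ → S) → Prop
  | zero : IsRatOmega (fun _ _ => 0)
  | add {p q : (ℕ → A) → ℕ → S} :
      IsRatOmega p → IsRatOmega q → IsRatOmega (fun w n => p w n + q w n)
  | smul_left (s : S) {p : (ℕ → A) → ℕ → S} :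
      IsRatOmega p → IsRatOmega (fun w n => s * p w n)
  | smul_right (s : S) {p : (ℕ → A) → ℕ → S} :
      IsRatOmega p → IsRatOmega (fun w n => p w n * s)
  | conjoin {x y : List A → S} :
      IsRat x → x [] = 0 → IsRat y → y [] = 0 → IsRatOmega (conjoinPS x y)
  | omega {z : List A → S} : IsRat z → z [] = 0 → IsRatOmega (omegaPS z)

/-- Scalar multiples `l·𝒜·r` of an automaton. -/
def smulWA (l : S) (𝒜 : WA A S) (r : S) : WA A S where
  Q := 𝒜.Q
  I := fun i => l * 𝒜.I i
  F := fun f => 𝒜.F f * r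
  M := 𝒜.M

/-- The disjoint-union (sum) automaton. -/
def addWA (𝒜 ℬ : WA A S) : WA A S where
  Q := 𝒜.Q ⊕ ℬ.Q
  I := Sum.elim 𝒜.I ℬ.I
  F := Sum.elim 𝒜.F ℬ.F
  M := fun a => Matrix.fromBlocks (𝒜.M a) 0 0 (ℬ.M a)

/-- `𝒜` is normalized with initial state `qI` and final state `qF`. -/
def IsNormalizedAt (𝒜 : WA A S) (qI qF : 𝒜.Q) : Prop :=
  qI ≠ qF ∧ (∀ i, 𝒜.I i = if i = qI then 1 else 0) ∧
    (∀ f, 𝒜.F f = if f = qF then 1 else 0) ∧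
    (∀ (a : A) (i : 𝒜.Q), 𝒜.M a i qI = 0) ∧ (∀ (a : A) (j : 𝒜.Q), 𝒜.M a qF j = 0)

/-- `𝒜` is normalized. -/
def IsNormalized (𝒜 : WA A S) : Prop := ∃ qI qF, IsNormalizedAt 𝒜 qI qF

/-- `𝒜` is a loopback automaton with loopback state `q₀`. -/
def IsLoopbackAt (𝒜 : WA A S) (q₀ : 𝒜.Q) : Prop :=
  (∀ i, 𝒜.I i = if i = q₀ then 1 else 0) ∧ (∀ f, 𝒜.F f = if f = q₀ then 1 else 0)

/-- `𝒜` is a loopback automaton. -/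
def IsLoopback (𝒜 : WA A S) : Prop := ∃ q₀, IsLoopbackAt 𝒜 q₀

/-- `𝒜` is a loopback automaton with prelude. -/
def IsLoopbackWithPrelude (𝒜 : WA A S) : Prop :=
  ∃ qI qF, qI ≠ qF ∧ (∀ i, 𝒜.I i = if i = qI then 1 else 0) ∧
    (∀ f, 𝒜.F f = if f = qF then 1 else 0) ∧
    (∀ (a : A) (i : 𝒜.Q), 𝒜.M a i qI = 0)

/-- `𝒜` is a bridge automaton. -/
def IsBridge (𝒜 : WA A S) : Prop :=
  ∃ qI qF, qI ≠ qF ∧ (∀ i, 𝒜.I i = if i = qI then 1 else 0) ∧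
    (∀ f, 𝒜.F f = if f = qF then 1 else 0)

/-- The unroll of a loopback automaton with loopback state `q₀`: adjoin a
fresh final state, redirect all edges ending at `q₀` to it. -/
def unroll (L : WA A S) (q₀ : L.Q) : WA A S where
  Q := L.Q ⊕ Unit
  I := Sum.elim (fun i => if i = q₀ then 1 else 0) (fun _ => 0)
  F := Sum.elim (fun _ => 0) (fun _ => 1)
  M := fun a => Matrix.of fun p q =>
    match p, q with
    | Sum.inl i, Sum.inl j => if j = q₀ then 0 else L.M a i j
    | Sum.inl i, Sum.inr _ => L.M a i q₀
    | Sum.inr _, _ => 0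

/-- The conjoin `X ⋆ Y` of two normalized automata (initial/final states
`xI`, `xF` and `yI`, `yF`): the disjoint sum of `X` minus its final state and
the roll of `Y`, with edges of `X` ending at `xF` redirected to the loopback
state `yI`. -/
def conjoinWA (X : WA A S) (xI xF : X.Q) (Y : WA A S) (yI yF : Y.Q) : WA A S where
  Q := {i : X.Q // i ≠ xF} ⊕ {j : Y.Q // j ≠ yF}
  I := Sum.elim (fun i => if i.1 = xI then 1 else 0) (fun _ => 0)
  F := Sum.elim (fun _ => 0) (fun j => if j.1 = yI then 1 else 0)
  M := fun a => Matrix.of fun p q =>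
    match p, q with
    | Sum.inl i, Sum.inl j => X.M a i.1 j.1
    | Sum.inl i, Sum.inr j => if j.1 = yI then X.M a i.1 xF else 0
    | Sum.inr _, Sum.inl _ => 0
    | Sum.inr i, Sum.inr j => if j.1 = yI then Y.M a i.1 yF else Y.M a i.1 j.1

/-- The finite slice `w[i..j)` of a biinfinite word. -/
def bpre (w : ℤ → A) (i j : ℤ) : List A :=
  (List.range (j - i).toNat).map (fun k => w (i + k))

/-- A pair of states `(p,q)` is activated by the biinfinite word `w` if for
all `i₀ ≤ j₀` there are `i ≤ i₀` and `j ≥ j₀` with `M(w[i..j))_{p,q} ≠ 0`. -/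
def BActivated (𝒜 : WA A S) (w : ℤ → A) (p q : 𝒜.Q) : Prop :=
  ∀ i₀ j₀ : ℤ, i₀ ≤ j₀ → ∃ i ≤ i₀, ∃ j, j₀ ≤ j ∧ Mword 𝒜 (bpre w i j) p q ≠ 0

/-- The bidiverging behavior
`𝒜(w,i,n) = Σ_{(p,q) activated} I(p)·M(w[i..i+n))_{p,q}·F(q)`. -/
noncomputable def bdivB (𝒜 : WA A S) (w : ℤ → A) (i : ℤ) (n : ℕ) : S :=
  ∑ p : 𝒜.Q × 𝒜.Q,
    if BActivated 𝒜 w p.1 p.2 then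
      𝒜.I p.1 * Mword 𝒜 (bpre w i (i + n)) p.1 p.2 * 𝒜.F p.2
    else 0

/-- `χ_ζ(w,x) = 1` iff arbitrarily long slices of `w` have nonzero coefficient. -/
noncomputable def chiZ (w : ℤ → A) (x : List A → S) : S :=
  if ∀ i₀ j₀ : ℤ, i₀ ≤ j₀ → ∃ i ≤ i₀, ∃ j, j₀ ≤ j ∧ x (bpre w i j) ≠ 0 then 1 else 0

/-- `s^ζ(w,i,n) = s*(w[i..i+n))·χ_ζ(w,s*)`. -/
noncomputable def zetaPS (s : List A → S) : (ℤ → A) → ℤ → ℕ → S :=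
  fun w i n => cstar s (bpre w i (i + n)) * chiZ w (cstar s)

/-- The conjoin `(x ⋆ m ⋆ y)(w,i,n) = (x*·m·y*)(w[i..i+n))·χ_ζ(w,x*·m·y*)`. -/
noncomputable def conjoin3PS (x m y : List A → S) : (ℤ → A) → ℤ → ℕ → S :=
  fun w i n =>
    cmul (cstar x) (cmul m (cstar y)) (bpre w i (i + n)) *
      chiZ w (cmul (cstar x) (cmul m (cstar y)))

/-- `Rat^ζ(S,A)`: the smallest set of bidiverging power series closed under
finite sums and left/right scalar multiplication containing all `x ⋆ m ⋆ y`
and `z^ζ` for proper rational `x`, `m`, `y`, `z`. -/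
inductive IsRatZeta : ((ℤ → A) → ℤ → ℕ → S) → Prop
  | zero : IsRatZeta (fun _ _ _ => 0)
  | add {p q : (ℤ → A) → ℤ → ℕ → S} :
      IsRatZeta p → IsRatZeta q → IsRatZeta (fun w i n => p w i n + q w i n)
  | smul_left (s : S) {p : (ℤ → A) → ℤ → ℕ → S} :
      IsRatZeta p → IsRatZeta (fun w i n => s * p w i n)
  | smul_right (s : S) {p : (ℤ → A) → ℤ → ℕ → S} :
      IsRatZeta p → IsRatZeta (fun w i n => p w i n * s)
  | conjoin {x m y : List A → S} :
      IsRat x → x [] = 0 → IsRat m → m [] = 0 → IsRat y → y [] = 0 →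
      IsRatZeta (conjoin3PS x m y)
  | zeta {z : List A → S} : IsRat z → z [] = 0 → IsRatZeta (zetaPS z)

/-- The conjoin `X ⋆ M̂ ⋆ Y` of three normalized automata: the roll of `X`
(loopback `xI`), the middle of `M̂`, and the roll of `Y` (loopback `yI`), with
the edges of `M̂` leaving `mI` re-sourced at `xI`, the edges of `M̂` entering
`mF` re-targeted at `yI`, and direct `mI → mF` edges becoming `xI → yI`. -/
def conjoin3WA (X : WA A S) (xI xF : X.Q) (Mh : WA A S) (mI mF : Mh.Q)
    (Y : WA A S) (yI yF : Y.Q) : WA A S where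
  Q := {i : X.Q // i ≠ xF} ⊕ ({k : Mh.Q // k ≠ mI ∧ k ≠ mF} ⊕ {j : Y.Q // j ≠ yF})
  I := Sum.elim (fun i => if i.1 = xI then 1 else 0) (fun _ => 0)
  F := Sum.elim (fun _ => 0) (Sum.elim (fun _ => 0) (fun j => if j.1 = yI then 1 else 0))
  M := fun a => Matrix.of fun p q =>
    match p, q with
    | Sum.inl i, Sum.inl j => if j.1 = xI then X.M a i.1 xF else X.M a i.1 j.1
    | Sum.inl i, Sum.inr (Sum.inl k) => if i.1 = xI then Mh.M a mI k.1 else 0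
    | Sum.inl i, Sum.inr (Sum.inr j) =>
        if i.1 = xI ∧ j.1 = yI then Mh.M a mI mF else 0
    | Sum.inr (Sum.inl _), Sum.inl _ => 0
    | Sum.inr (Sum.inl k), Sum.inr (Sum.inl l) => Mh.M a k.1 l.1
    | Sum.inr (Sum.inl k), Sum.inr (Sum.inr j) => if j.1 = yI then Mh.M a k.1 mF else 0
    | Sum.inr (Sum.inr _), Sum.inl _ => 0
    | Sum.inr (Sum.inr _), Sum.inr (Sum.inl _) => 0
    | Sum.inr (Sum.inr i), Sum.inr (Sum.inr j) =>
        if j.1 = yI then Y.M a i.1 yF else Y.M a i.1 j.1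

/-! The conjoin `X ⋆ Y` starts only in `xI` and ends only in the loopback state `yI`, so its
diverging behavior is the entry `M(w[0..n))_{xI,yI}` times the activation indicator of that very
entry, which is `χ(w, ·)` of the entry viewed as a power series. The column of `M(u)` at `yI` is
computed by backward recursion on `u`: a run from a state `i` of `X` first reaches the old final
state `xF` and then performs loops of `Y`, giving `(X_{i,xF} · y*)(u)`; since `y` is proper,
`y* = 1 + y · y*` makes the state `yI` itself consistent with this recursion. -/

section Series

lemma cmul_nil (x y : List A → S) : cmul x y [] = x [] * y [] := by
  simp [cmul]

lemma cmul_cons (x y : List A → S) (a : A) (u : List A) :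
    cmul x y (a :: u) = x [] * y (a :: u) + cmul (fun v => x (a :: v)) y u := by
  rw [cmul, List.length_cons, Finset.sum_range_succ', add_comm]
  simp [cmul]

lemma cmul_cone_left (y : List A → S) : cmul cone y = y := by
  funext u
  cases u with
  | nil => simp [cmul_nil, cone]
  | cons a u =>
    rw [cmul_cons]
    simp [cmul, cone]

lemma cstar_nil (x : List A → S) : cstar x [] = 1 := by
  simp [cstar, cpow, cone]

variable {x : List A → S}

lemma cpow_eq_zero_of_length_lt (hx : x [] = 0) {k : ℕ} {w : List A} (hw : w.length < k) :
    cpow x k w = 0 := by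
  induction k generalizing w with
  | zero => omega
  | succ k ih =>
    simp only [cpow, cmul]
    refine Finset.sum_eq_zero fun m hm => ?_
    rcases m with _ | m
    · simp [hx]
    · rw [Finset.mem_range] at hm
      rw [ih (by rw [List.length_drop]; omega), mul_zero]

lemma cstar_eq_sum_range (hx : x [] = 0) {w : List A} {N : ℕ} (hN : w.length ≤ N) :
    cstar x w = ∑ k ∈ Finset.range (N + 1), cpow x k w :=
  Finset.sum_subset (Finset.range_subset_range.2 (by omega)) fun _ _ hk =>
    cpow_eq_zero_of_length_lt hx (by simpa using hk)

lemma cstar_eq_cone_add_cmul (hx : x [] = 0) (w : List A) :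
    cstar x w = cone w + cmul x (cstar x) w := by
  have hsplit : cmul x (cstar x) w = ∑ k ∈ Finset.range (w.length + 1), cpow x (k + 1) w := by
    simp only [cmul]
    rw [Finset.sum_congr rfl fun m _ => by
      rw [cstar_eq_sum_range hx (N := w.length) (by simp), Finset.mul_sum]]
    exact Finset.sum_comm
  rw [hsplit, cstar_eq_sum_range hx (N := w.length + 1) (by omega), Finset.sum_range_succ']
  exact add_comm _ _

end Series

section Automata

variable (𝒜 : WA A S)

lemma Mword_nil : Mword 𝒜 [] = 1 := rfl

lemma Mword_cons_apply (a : A) (u : List A) (i j : 𝒜.Q) :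
    Mword 𝒜 (a :: u) i j = ∑ l, 𝒜.M a i l * Mword 𝒜 u l j := by
  simp [Mword, Matrix.mul_apply]

def entrySeries (i j : 𝒜.Q) : List A → S := fun w => Mword 𝒜 w i j

lemma cmul_entrySeries_cons (y : List A → S) (a : A) (u : List A) (i j : 𝒜.Q) :
    cmul (entrySeries 𝒜 i j) y (a :: u)
      = Mword 𝒜 [] i j * y (a :: u) + ∑ l, 𝒜.M a i l * cmul (entrySeries 𝒜 l j) y u := by
  rw [cmul_cons]
  simp only [cmul, entrySeries, Mword_cons_apply, Finset.sum_mul, Finset.mul_sum, mul_assoc]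
  rw [Finset.sum_comm]

lemma entrySeries_self_eq_cone {q : 𝒜.Q} (hq : ∀ a j, 𝒜.M a q j = 0) :
    entrySeries 𝒜 q q = cone := by
  funext u
  cases u with
  | nil => simp [entrySeries, Mword_nil, cone]
  | cons a u => simp [entrySeries, Mword_cons_apply, hq, cone]

lemma Mword_apply_eq_of_recursion {t : 𝒜.Q} (g : 𝒜.Q → List A → S)
    (hnil : ∀ i, g i [] = if i = t then 1 else 0)
    (hcons : ∀ a u i, g i (a :: u) = ∑ l, 𝒜.M a i l * g l u) (u : List A) (i : 𝒜.Q) :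
    Mword 𝒜 u i t = g i u := by
  induction u generalizing i with
  | nil => rw [hnil, Mword_nil, Matrix.one_apply]
  | cons a u ih => simp only [Mword_cons_apply, hcons, ih]

variable {𝒜} {qI qF : 𝒜.Q} (hI : ∀ i, 𝒜.I i = if i = qI then 1 else 0)
  (hF : ∀ f, 𝒜.F f = if f = qF then 1 else 0)
include hI hF

lemma convB_eq_entrySeries : convB 𝒜 = entrySeries 𝒜 qI qF := by
  funext u
  simp [convB, entrySeries, hI, hF]

lemma divB_eq_of_indicator (w : ℕ → A) (n : ℕ) :
    divB 𝒜 w n = Mword 𝒜 (wpre w n) qI qF * chi w (entrySeries 𝒜 qI qF) := by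
  rw [divB, Fintype.sum_eq_single (qI, qF)]
  · change ite _ _ _ = _ * ite (Activated 𝒜 w qI qF) 1 0
    simp only [hI, hF, if_true, one_mul, mul_one]
    split_ifs <;> simp
  · rintro ⟨i, f⟩ hif
    by_cases hi : i = qI
    · simp [hF, show f ≠ qF by rintro rfl; exact hif (by rw [hi])]
    · simp [hI, hi]

end Automata

section Conjoin

variable {X Y : WA A S} {xI xF : X.Q} {yI yF : Y.Q}

def conjoinInit (hxI : xI ≠ xF) : (conjoinWA X xI xF Y yI yF).Q := Sum.inl ⟨xI, hxI⟩

def conjoinLoop (hyI : yI ≠ yF) : (conjoinWA X xI xF Y yI yF).Q := Sum.inr ⟨yI, hyI⟩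

lemma conjoinWA_I (hxI : xI ≠ xF) (p : (conjoinWA X xI xF Y yI yF).Q) :
    (conjoinWA X xI xF Y yI yF).I p = if p = conjoinInit hxI then 1 else 0 := by
  rcases p with i | j <;> simp [conjoinWA, conjoinInit, Subtype.ext_iff]

lemma conjoinWA_F (hyI : yI ≠ yF) (p : (conjoinWA X xI xF Y yI yF).Q) :
    (conjoinWA X xI xF Y yI yF).F p = if p = conjoinLoop hyI then 1 else 0 := by
  rcases p with i | j <;> simp [conjoinWA, conjoinLoop, Subtype.ext_iff]

/-- The column of the conjoin's transition matrix at the loopback state `yI`: from `X` one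
first follows a path to `xF`, then any number of loops of `Y`; from `Y` one first completes
the current loop (or stays put at `yI`). -/
def conjoinCol (X : WA A S) (xI xF : X.Q) (Y : WA A S) (yI yF : Y.Q) :
    (conjoinWA X xI xF Y yI yF).Q → List A → S :=
  Sum.elim (fun i => cmul (entrySeries X i.1 xF) (cstar (convB Y)))
    (fun j => if j.1 = yI then cstar (convB Y) else cmul (entrySeries Y j.1 yF) (cstar (convB Y)))

lemma conjoinCol_nil (hyI : yI ≠ yF) (p : (conjoinWA X xI xF Y yI yF).Q) :
    conjoinCol X xI xF Y yI yF p [] = if p = conjoinLoop hyI then 1 else 0 := by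
  by_cases hp : p = conjoinLoop hyI
  · subst hp
    rw [if_pos rfl]
    simp [conjoinLoop, conjoinCol, cstar_nil]
  rw [if_neg hp]
  rcases p with ⟨i, hi⟩ | ⟨j, hj⟩
  · simp [conjoinCol, cmul_nil, entrySeries, Mword_nil, Matrix.one_apply_ne hi]
  · have hjI : j ≠ yI := by rintro rfl; exact hp rfl
    simp [conjoinCol, hjI, cmul_nil, entrySeries, Mword_nil, Matrix.one_apply_ne hj]

lemma sum_conjoinWA (f : (conjoinWA X xI xF Y yI yF).Q → S) :
    ∑ p, f p = ∑ i, f (Sum.inl i) + ∑ j, f (Sum.inr j) :=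
  Fintype.sum_sum_type f

lemma conjoinCol_inl_cons (hxF : ∀ a j, X.M a xF j = 0) (hyI : yI ≠ yF) (a : A) (u : List A)
    (i : {i : X.Q // i ≠ xF}) :
    conjoinCol X xI xF Y yI yF (Sum.inl i) (a :: u)
      = ∑ p, (conjoinWA X xI xF Y yI yF).M a (Sum.inl i) p * conjoinCol X xI xF Y yI yF p u := by
  have hcross : ∑ j : {j : Y.Q // j ≠ yF},
      (conjoinWA X xI xF Y yI yF).M a (Sum.inl i) (Sum.inr j)
        * conjoinCol X xI xF Y yI yF (Sum.inr j) u = X.M a i xF * cstar (convB Y) u := by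
    rw [Fintype.sum_eq_single ⟨yI, hyI⟩ fun j hj => ?_]
    · simp [conjoinWA, conjoinCol]
    · simp [conjoinWA, show j.1 ≠ yI from fun h => hj (Subtype.ext h)]
  rw [sum_conjoinWA, hcross]
  simp only [conjoinCol, Sum.elim_inl, cmul_entrySeries_cons, Mword_nil,
    Matrix.one_apply_ne i.2, zero_mul, zero_add, Fintype.sum_eq_add_sum_subtype_ne _ xF,
    entrySeries_self_eq_cone X hxF, cmul_cone_left, add_comm]
  rfl

lemma conjoinCol_inr_cons (hY : IsNormalizedAt Y yI yF) (a : A) (u : List A)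
    (j : {j : Y.Q // j ≠ yF}) :
    conjoinCol X xI xF Y yI yF (Sum.inr j) (a :: u)
      = ∑ p, (conjoinWA X xI xF Y yI yF).M a (Sum.inr j) p * conjoinCol X xI xF Y yI yF p u := by
  obtain ⟨hyI, hI, hF, hin, hout⟩ := hY
  have hy : convB Y = entrySeries Y yI yF := convB_eq_entrySeries hI hF
  have hlhs : conjoinCol X xI xF Y yI yF (Sum.inr j) (a :: u)
      = cmul (entrySeries Y j.1 yF) (cstar (convB Y)) (a :: u) := by
    by_cases hj : j.1 = yI
    · have hy0 : convB Y [] = 0 := by simp [hy, entrySeries, Mword_nil, Matrix.one_apply_ne hyI]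
      simp only [conjoinCol, Sum.elim_inr, if_pos hj]
      rw [hj, ← hy, cstar_eq_cone_add_cmul hy0]
      simp [cone]
    · simp [conjoinCol, hj]
  have hterm : ∀ l : {l : Y.Q // l ≠ yF},
      (conjoinWA X xI xF Y yI yF).M a (Sum.inr j) (Sum.inr l)
          * conjoinCol X xI xF Y yI yF (Sum.inr l) u
        = (if l.1 = yI then Y.M a j yF * cstar (convB Y) u else 0)
          + Y.M a j l * cmul (entrySeries Y l.1 yF) (cstar (convB Y)) u := by
    intro l
    by_cases hl : l.1 = yI
    · simp [conjoinWA, conjoinCol, hl, hin]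
    · simp [conjoinWA, conjoinCol, hl]
  rw [hlhs, sum_conjoinWA, Fintype.sum_congr _ _ hterm]
  have hcross : ∀ i : {i : X.Q // i ≠ xF},
      (conjoinWA X xI xF Y yI yF).M a (Sum.inr j) (Sum.inl i) = 0 := fun _ => rfl
  have hloop : ∑ l : {l : Y.Q // l ≠ yF},
      (if l.1 = yI then Y.M a j yF * cstar (convB Y) u else 0)
        = Y.M a j yF * cstar (convB Y) u := by
    rw [Fintype.sum_eq_single ⟨yI, hyI⟩ fun l hl => if_neg fun h => hl (Subtype.ext h),
      if_pos rfl]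
  rw [Finset.sum_add_distrib, hloop, cmul_entrySeries_cons, Fintype.sum_eq_add_sum_subtype_ne _ yF,
    entrySeries_self_eq_cone Y hout, cmul_cone_left]
  simp [hcross, Mword_nil, Matrix.one_apply_ne j.2]

lemma Mword_conjoinWA_apply_conjoinLoop (hxF : ∀ a j, X.M a xF j = 0)
    (hY : IsNormalizedAt Y yI yF) (u : List A) (p : (conjoinWA X xI xF Y yI yF).Q) :
    Mword (conjoinWA X xI xF Y yI yF) u p (conjoinLoop hY.1) = conjoinCol X xI xF Y yI yF p u :=
  Mword_apply_eq_of_recursion _ _ (conjoinCol_nil hY.1) (fun a u p => by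
    rcases p with i | j
    exacts [conjoinCol_inl_cons hxF hY.1 a u i, conjoinCol_inr_cons hY a u j]) u p

end Conjoin

/-- the diverging behavior of the conjoin of two normalized
automata is the conjoin of their converging behaviors. -/
theorem divB_conjoinWA (A S : Type) [Semiring S]
    (X : WA A S) (xI xF : X.Q) (hX : IsNormalizedAt X xI xF)
    (Y : WA A S) (yI yF : Y.Q) (hY : IsNormalizedAt Y yI yF) :
    ∀ (w : ℕ → A) (n : ℕ),
      divB (conjoinWA X xI xF Y yI yF) w n
        = cmul (convB X) (cstar (convB Y)) (wpre w n) *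
            chi w (cmul (convB X) (cstar (convB Y))) := by
  intro w n
  have hcol : entrySeries (conjoinWA X xI xF Y yI yF) (conjoinInit hX.1) (conjoinLoop hY.1)
      = cmul (convB X) (cstar (convB Y)) := by
    funext u
    rw [entrySeries, Mword_conjoinWA_apply_conjoinLoop hX.2.2.2.2 hY,
      convB_eq_entrySeries hX.2.1 hX.2.2.1]
    rfl
  rw [divB_eq_of_indicator (conjoinWA_I hX.1) (conjoinWA_F hY.1), ← hcol]
  rfl
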